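/- Convolution with an integrable kernel h is a linear filter with characteristic function the Fourier transform ĥ: if (LX)_t = ∫_ℝ h(s) X_{t-s} ds (Bochner integral in L² sense) with h ∈ L¹(ℝ), then LX is mean-zero WSS with spectral measure dS_{LX}(ν) = |ĥ(ν)|² dS_X(ν), where ĥ(ν) = ∫ e^{-2πisν} h(s) ds, with the convention making (LX)_t = ∫ e^{2πitν} ĥ(ν) X̂[dν]. -/

import Mathlib

open MeasureTheory Real ComplexConjugate

lemma norm_exp_eq_one {z : ℂ} (hz : z.re = 0) : ‖Complex.exp z‖ = 1 := by
  rw [Complex.norm_exp, hz, Real.exp_zero]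

lemma swap_aux (S : Measure ℝ) [IsFiniteMeasure S] (f : ℝ → ℂ) (hf : Integrable f)
    (e : ℝ → ℝ → ℂ) (he : Continuous fun p : ℝ × ℝ => e p.1 p.2)
    (M : ℝ) (hbd : ∀ u ν, ‖e u ν‖ ≤ M) :
    ∫ u, f u * ∫ ν, e u ν ∂S = ∫ ν, (∫ u, f u * e u ν) ∂S := by
  have h1 : Integrable (fun z : ℝ × ℝ => f z.1) ((volume : Measure ℝ).prod S) := by
    have := hf.mul_prod (integrable_const (1:ℂ)) (ν := S)
    simpa using this
  have hint : Integrable (fun z : ℝ × ℝ => f z.1 * e z.1 z.2) ((volume : Measure ℝ).prod S) := by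
    have := h1.bdd_mul he.aestronglyMeasurable (Filter.Eventually.of_forall fun z => hbd z.1 z.2)
    simpa [mul_comm] using this
  have hswap := integral_integral_swap (f := fun u ν => f u * e u ν) hint
  simp_rw [integral_const_mul] at hswap
  exact hswap

/-- convolution with an integrable kernel `h` is a linear filter whose
characteristic function is the Fourier transform `ĥ(ν) = ∫ e^{-2πisν} h(s) ds`: the
process `(LX)_t = ∫ h(s) X_{t-s} ds` is mean-zero WSS with spectral measure
`dS_{LX}(ν) = |ĥ(ν)|² dS_X(ν)`. -/
theorem convolution_filter
    {Ω : Type*} [MeasurableSpace Ω] (μ : Measure Ω) [IsProbabilityMeasure μ]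
    (X : ℝ → Lp ℂ 2 μ) (S : Measure ℝ) [IsFiniteMeasure S]
    (hmean : ∀ t, ∫ ω, (X t : Ω → ℂ) ω ∂μ = 0)
    (hcov : ∀ s t : ℝ, (inner ℂ (X s) (X t) : ℂ) =
      ∫ ν, Complex.exp (2 * π * Complex.I * (t - s) * ν) ∂S)
    (hXcont : Continuous X)
    (h : ℝ → ℂ) (hh : Integrable h)
    (Y : ℝ → Lp ℂ 2 μ) (hY : ∀ t : ℝ, Y t = ∫ s : ℝ, h s • X (t - s))
    (hhat : ℝ → ℂ)
    (hhhat : ∀ ν : ℝ, hhat ν = ∫ s : ℝ, Complex.exp (-(2 * π * Complex.I * s * ν)) * h s) :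
    (∀ t, ∫ ω, (Y t : Ω → ℂ) ω ∂μ = 0) ∧
    (∀ s t : ℝ, (inner ℂ (Y s) (Y t) : ℂ) =
      ∫ ν, Complex.exp (2 * π * Complex.I * (t - s) * ν) * (conj (hhat ν) * hhat ν) ∂S) := by
  -- the norm of X is constant
  set C : ℝ := Real.sqrt (S Set.univ).toReal with hC
  have hnX : ∀ r : ℝ, ‖X r‖ = C := by
    intro r
    have h1 : (inner ℂ (X r) (X r) : ℂ) = (((S Set.univ).toReal : ℝ) : ℂ) := by
      rw [hcov r r]; simp [measureReal_def]
    have h2 : ‖X r‖^2 = (S Set.univ).toReal := by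
      rw [← inner_self_eq_norm_sq (𝕜 := ℂ), h1]
      simp
    rw [hC, ← h2, Real.sqrt_sq (norm_nonneg _)]
  -- integrability of the convolution integrand
  have hint : ∀ t : ℝ, Integrable (fun s => h s • X (t - s)) volume := by
    intro t
    have hsm : AEStronglyMeasurable (fun s => h s • X (t - s)) volume :=
      hh.aestronglyMeasurable.smul
        ((hXcont.comp (continuous_const.sub continuous_id)).aestronglyMeasurable)
    refine (hh.norm.mul_const C).mono' hsm ?_
    refine Filter.Eventually.of_forall fun s => ?_
    rw [norm_smul, hnX]
  constructor
  · -- mean zero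
    intro t
    have key : ∀ f : Lp ℂ 2 μ, (inner ℂ (Lp.const 2 μ (1:ℂ)) f : ℂ) = ∫ ω, f ω ∂μ := by
      intro f
      rw [L2.inner_def]
      refine integral_congr_ae ?_
      filter_upwards [Lp.coeFn_const 2 μ (1:ℂ)] with ω hω
      rw [hω]
      simp [RCLike.inner_apply]
    have h1 := (innerSL ℂ (Lp.const 2 μ (1:ℂ))).integral_comp_comm (hint t)
    simp only [innerSL_apply_apply] at h1
    rw [← key (Y t), hY t, ← h1]
    have h2 : ∀ s : ℝ, (inner ℂ (Lp.const 2 μ (1:ℂ)) (h s • X (t - s)) : ℂ) = 0 := by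
      intro s
      rw [inner_smul_right, key (X (t - s)), hmean, mul_zero]
    simp only [h2, integral_zero]
  · -- covariance
    intro s t
    have hhat_bd : ∀ ν : ℝ, ‖hhat ν‖ ≤ ∫ u, ‖h u‖ := by
      intro ν
      rw [hhhat ν]
      refine le_trans (norm_integral_le_integral_norm _) (le_of_eq ?_)
      refine integral_congr_ae (Filter.Eventually.of_forall fun u => ?_)
      dsimp only
      rw [norm_mul, norm_exp_eq_one (by simp [Complex.mul_re, Complex.mul_im]), one_mul]
    have hhat_cont : Continuous hhat := by
      rw [funext hhhat]
      refine continuous_of_dominated (bound := fun u => ‖h u‖) ?_ ?_ hh.norm ?_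
      · intro ν
        exact (Complex.continuous_exp.comp (by fun_prop)).aestronglyMeasurable.mul
          hh.aestronglyMeasurable
      · intro ν
        refine Filter.Eventually.of_forall fun u => ?_
        rw [norm_mul, norm_exp_eq_one (by simp [Complex.mul_re, Complex.mul_im]), one_mul]
      · refine Filter.Eventually.of_forall fun u => ?_
        exact (Complex.continuous_exp.comp (by fun_prop)).mul continuous_const
    -- inner product with Y on the right
    have hXY : ∀ (w : Lp ℂ 2 μ) (r : ℝ), (inner ℂ w (Y r) : ℂ)
        = ∫ v, h v * (inner ℂ w (X (r - v)) : ℂ) := by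
      intro w r
      have h1 := (innerSL ℂ w).integral_comp_comm (hint r)
      simp only [innerSL_apply_apply] at h1
      rw [hY r, ← h1]
      refine integral_congr_ae (Filter.Eventually.of_forall fun v => ?_)
      dsimp only
      rw [inner_smul_right]
    have hYX : ∀ v : ℝ, (inner ℂ (Y s) (X (t - v)) : ℂ)
        = ∫ u, conj (h u) * (inner ℂ (X (s - u)) (X (t - v)) : ℂ) := by
      intro v
      rw [← inner_conj_symm, hXY (X (t - v)) s, ← integral_conj]
      refine integral_congr_ae (Filter.Eventually.of_forall fun u => ?_)
      dsimp only
      rw [map_mul, inner_conj_symm]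
    -- step 1
    have step1 : ∀ v : ℝ, (inner ℂ (Y s) (X (t - v)) : ℂ)
        = ∫ ν, Complex.exp (2 * π * Complex.I * (t - s - v) * ν) * conj (hhat ν) ∂S := by
      intro v
      rw [hYX v]
      have e1 : ∫ u, conj (h u) * (inner ℂ (X (s - u)) (X (t - v)) : ℂ)
          = ∫ u, conj (h u) * ∫ ν,
              Complex.exp (2 * π * Complex.I * ((t - v : ℝ) - (s - u : ℝ)) * ν) ∂S := by
        refine integral_congr_ae (Filter.Eventually.of_forall fun u => ?_)
        dsimp only
        rw [hcov (s - u) (t - v)]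
      have hhconj : Integrable (fun u => conj (h u)) volume := by
        refine hh.norm.mono'
          (Complex.continuous_conj.comp_aestronglyMeasurable hh.aestronglyMeasurable)
          (Filter.Eventually.of_forall fun u => by simp)
      rw [e1, swap_aux S (fun u => conj (h u)) hhconj
        (fun u ν => Complex.exp (2 * π * Complex.I * ((t - v : ℝ) - (s - u : ℝ)) * ν))
        (Complex.continuous_exp.comp (by fun_prop)) 1
        (fun u ν => le_of_eq (norm_exp_eq_one (by simp [Complex.mul_re, Complex.mul_im])))]
      refine integral_congr_ae (Filter.Eventually.of_forall fun ν => ?_)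
      have e2 : ∀ u : ℝ, conj (h u) *
          Complex.exp (2 * π * Complex.I * ((t - v : ℝ) - (s - u : ℝ)) * ν)
          = Complex.exp (2 * π * Complex.I * (t - s - v) * ν) *
              conj (Complex.exp (-(2 * π * Complex.I * u * ν)) * h u) := by
        intro u
        rw [map_mul, ← Complex.exp_conj]
        have : (starRingEnd ℂ) (-(2 * π * Complex.I * u * ν)) = 2 * π * Complex.I * u * ν := by
          simp only [map_neg, map_mul, Complex.conj_I, Complex.conj_ofReal, map_ofNat]
          ring
        rw [this, show (2 * π * Complex.I * ((t - v : ℝ) - (s - u : ℝ)) * ν : ℂ)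
            = 2 * π * Complex.I * (t - s - v) * ν + 2 * π * Complex.I * u * ν by
          push_cast; ring, Complex.exp_add]
        ring
      simp_rw [e2]
      rw [integral_const_mul, integral_conj, ← hhhat ν]
    -- step 2
    rw [hXY (Y s) t]
    have e3 : ∫ v, h v * (inner ℂ (Y s) (X (t - v)) : ℂ)
        = ∫ v, h v * ∫ ν, Complex.exp (2 * π * Complex.I * (t - s - v) * ν) * conj (hhat ν) ∂S := by
      refine integral_congr_ae (Filter.Eventually.of_forall fun v => ?_)
      dsimp only
      rw [step1 v]
    rw [e3, swap_aux S h hh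
      (fun v ν => Complex.exp (2 * π * Complex.I * (t - s - v) * ν) * conj (hhat ν))
      ((Complex.continuous_exp.comp (by fun_prop)).mul
        (Complex.continuous_conj.comp (hhat_cont.comp continuous_snd))) (∫ u, ‖h u‖)
      (fun v ν => by
        rw [norm_mul, norm_exp_eq_one (by simp [Complex.mul_re, Complex.mul_im]), one_mul,
          RCLike.norm_conj]
        exact hhat_bd ν)]
    refine integral_congr_ae (Filter.Eventually.of_forall fun ν => ?_)
    have e4 : ∀ v : ℝ, h v * (Complex.exp (2 * π * Complex.I * (t - s - v) * ν) * conj (hhat ν))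
        = (Complex.exp (2 * π * Complex.I * (t - s) * ν) * conj (hhat ν)) *
            (Complex.exp (-(2 * π * Complex.I * v * ν)) * h v) := by
      intro v
      rw [show (2 * π * Complex.I * (t - s - v) * ν : ℂ)
          = 2 * π * Complex.I * (t - s) * ν + -(2 * π * Complex.I * v * ν) by push_cast; ring,
        Complex.exp_add]
      ring
    simp_rw [e4]
    rw [integral_const_mul, ← hhhat ν]
    ring
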